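/- arXiv:2412.09740 — 2 statements merged into one kernel-verified Lean document; each statement's English description precedes it below -/
import Mathlib

section
/- Let T_x and T_y be finite sets of real numbers (timestamps). Define S_(x,y) as the set of pairs (t, n(t)) for t in T_x, where n(t) is a nearest element of T_y to t, and define S_(y,x) symmetrically. Let A = { (t_x, t_y) : (t_x, t_y) ∈ S_(x,y) and (t_y, t_x) ∈ S_(y,x) } (mutual nearest-neighbor pairs). Then for every set of pairs Ã ⊆ T_x × T_y with |Ã| ≥ |A|, and for every pair (a, b) ∈ Ã, there exists a pair (t_x, t_y) ∈ A with |t_x − t_y| ≤ |a − b|. -/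
/-!
Let `d` be the least distance between a point of `T_x` and a point of `T_y`. Start from a point
`t` of `T_x` whose nearest neighbour `s` is at distance `d` and keep following nearest neighbours.
Every pair met on the way is again at distance `d`, and unless it is mutual, the next point is
the reflection of the previous one through the current one (on the line, a point at distance `d`
from `s` other than `t` is `2 s - t`). So the walk advances by `2 (s - t)` at each round trip; as
`T_x` is finite, it must stop at a mutual pair, whose distance `d` is at most that of any pair.
-/

theorem eq_or_eq_two_mul_sub_of_abs_sub_eq {a b c : ℝ} (h : |a - c| = |b - c|) :
    a = b ∨ a = 2 * c - b := by
  rcases abs_eq_abs.mp h with h | h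
  · exact Or.inl (by linarith)
  · exact Or.inr (by linarith)

theorem exists_mutual_nearest_of_abs_sub_eq {X Y : Finset ℝ} {ny nx : ℝ → ℝ} {d : ℝ}
    (hny : ∀ t ∈ X, ny t ∈ Y ∧ ∀ s ∈ Y, |t - ny t| ≤ |t - s|)
    (hnx : ∀ s ∈ Y, nx s ∈ X ∧ ∀ t ∈ X, |nx s - s| ≤ |t - s|)
    (hd : ∀ t ∈ X, ∀ s ∈ Y, d ≤ |t - s|) {t₀ : ℝ} (ht₀ : t₀ ∈ X) (ht₀d : |t₀ - ny t₀| = d) :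
    ∃ t ∈ X, |t - ny t| = d ∧ nx (ny t) = t := by
  set e := ny t₀ - t₀
  -- the walk keeps the offset `e`; take its furthest point in the direction of `e`
  obtain ⟨t, htS, hmax⟩ := (X.filter fun t => ny t - t = e).exists_max_image (e * ·)
    ⟨t₀, Finset.mem_filter.mpr ⟨ht₀, rfl⟩⟩
  obtain ⟨ht, hte⟩ := Finset.mem_filter.mp htS
  set s := ny t
  set t' := nx s
  obtain ⟨hs, -⟩ := hny t ht
  obtain ⟨ht', ht's⟩ := hnx s hs
  have htd : |t - s| = d := by
    rw [abs_sub_comm, hte, ← ht₀d, abs_sub_comm]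
  have ht'd : |t' - s| = d := le_antisymm ((ht's t ht).trans htd.le) (hd t' ht' s hs)
  by_cases hback : t' = t
  · exact ⟨t, ht, htd, hback⟩
  have ht'_eq : t' = t + 2 * e := by
    have := (eq_or_eq_two_mul_sub_of_abs_sub_eq (ht'd.trans htd.symm)).resolve_left hback
    linarith
  set s' := ny t'
  obtain ⟨hs', hs's⟩ := hny t' ht'
  have hs'd : |t' - s'| = d := le_antisymm ((hs's s hs).trans ht'd.le) (hd t' ht' s' hs')
  by_cases hback' : s' = s
  · exact ⟨t', ht', hs'd, show nx s' = t' by rw [hback']⟩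
  have hs'_eq : s' - t' = e := by
    have hrefl : |s' - t'| = |s - t'| := by rw [abs_sub_comm, hs'd, ← ht'd, abs_sub_comm]
    have := (eq_or_eq_two_mul_sub_of_abs_sub_eq hrefl).resolve_left hback'
    linarith
  have he : e ≠ 0 := fun he => hback (by rw [ht'_eq, he]; ring)
  have hfurther := hmax t' (Finset.mem_filter.mpr ⟨ht', hs'_eq⟩)
  rw [ht'_eq] at hfurther
  nlinarith [sq_pos_of_ne_zero he]

theorem exists_mutual_nearest_forall_le {X Y : Finset ℝ} {ny nx : ℝ → ℝ}
    (hny : ∀ t ∈ X, ny t ∈ Y ∧ ∀ s ∈ Y, |t - ny t| ≤ |t - s|)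
    (hnx : ∀ s ∈ Y, nx s ∈ X ∧ ∀ t ∈ X, |nx s - s| ≤ |t - s|)
    (hX : X.Nonempty) (hY : Y.Nonempty) :
    ∃ t ∈ X, nx (ny t) = t ∧ ∀ t' ∈ X, ∀ s ∈ Y, |t - ny t| ≤ |t' - s| := by
  obtain ⟨q, hq, hmin⟩ := (X ×ˢ Y).exists_min_image (fun q => |q.1 - q.2|) (hX.product hY)
  obtain ⟨hq₁, hq₂⟩ := Finset.mem_product.mp hq
  have hd : ∀ t ∈ X, ∀ s ∈ Y, |q.1 - q.2| ≤ |t - s| := fun t ht s hs =>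
    hmin (t, s) (Finset.mem_product.mpr ⟨ht, hs⟩)
  obtain ⟨hnyq, hnyq_le⟩ := hny q.1 hq₁
  have hqd : |q.1 - ny q.1| = |q.1 - q.2| := le_antisymm (hnyq_le q.2 hq₂) (hd _ hq₁ _ hnyq)
  obtain ⟨t, ht, htd, hmut⟩ := exists_mutual_nearest_of_abs_sub_eq hny hnx hd hq₁ hqd
  exact ⟨t, ht, hmut, htd ▸ hd⟩

theorem stmt_0_general (Tx Ty : Finset ℝ) (hTx : Tx.Nonempty) (hTy : Ty.Nonempty)
    (ny nx : ℝ → ℝ)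
    (hny : ∀ t ∈ Tx, ny t ∈ Ty ∧ ∀ s ∈ Ty, |t - ny t| ≤ |t - s|)
    (hnx : ∀ s ∈ Ty, nx s ∈ Tx ∧ ∀ t ∈ Tx, |nx s - s| ≤ |t - s|)
    (A : Finset (ℝ × ℝ))
    (hA : A = (Tx ×ˢ Ty).filter (fun p => ny p.1 = p.2 ∧ nx p.2 = p.1))
    (At : Finset (ℝ × ℝ)) (hAt : At ⊆ Tx ×ˢ Ty) :
    ∀ p ∈ At, ∃ q ∈ A, |q.1 - q.2| ≤ |p.1 - p.2| := by
  intro p hp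
  obtain ⟨hp₁, hp₂⟩ := Finset.mem_product.mp (hAt hp)
  obtain ⟨t, ht, hmut, hmin⟩ := exists_mutual_nearest_forall_le hny hnx hTx hTy
  refine ⟨(t, ny t), ?_, hmin p.1 hp₁ p.2 hp₂⟩
  rw [hA, Finset.mem_filter, Finset.mem_product]
  exact ⟨⟨ht, (hny t ht).1⟩, rfl, hmut⟩

/-- mutual nearest-neighbor alignment guarantee (Theorem 1 of the paper). -/
theorem stmt_0 (Tx Ty : Finset ℝ) (hTx : Tx.Nonempty) (hTy : Ty.Nonempty)
    (ny nx : ℝ → ℝ)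
    (hny : ∀ t ∈ Tx, ny t ∈ Ty ∧ ∀ s ∈ Ty, |t - ny t| ≤ |t - s|)
    (hnx : ∀ s ∈ Ty, nx s ∈ Tx ∧ ∀ t ∈ Tx, |nx s - s| ≤ |t - s|)
    (A : Finset (ℝ × ℝ))
    (hA : A = (Tx ×ˢ Ty).filter (fun p => ny p.1 = p.2 ∧ nx p.2 = p.1))
    (At : Finset (ℝ × ℝ)) (hAt : At ⊆ Tx ×ˢ Ty) (hcard : A.card ≤ At.card) :
    ∀ p ∈ At, ∃ q ∈ A, |q.1 - q.2| ≤ |p.1 - p.2| :=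
  stmt_0_general Tx Ty hTx hTy ny nx hny hnx A hA At hAt
end

section
/- Given finitely many pairs (t_{x,i}, t_{y,i}) in the mutual-nearest-neighbor alignment A of finite real sets T_x and T_y, the alignment is order-preserving: if (t, s) ∈ A and (t', s') ∈ A with t < t', then s ≤ s'. -/
/-!
For `s' < s`, a point `t` is strictly nearer to `s` than to `s'` exactly when it lies above their
midpoint. If `t < t'` were matched to `s > s'` respectively, `t` would lie above the midpoint of
`s'` and `s` and `t'` below it.
-/

section NearestNeighbour

variable {α : Type*} [AddCommGroup α] [LinearOrder α] [IsOrderedAddMonoid α]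

theorem abs_sub_lt_abs_sub_iff_add_lt_add {t s s' : α} (hs : s' < s) :
    |t - s| < |t - s'| ↔ s + s' < t + t := by
  grind [abs_lt, lt_abs]

theorem le_of_abs_sub_lt_abs_sub {t t' s s' : α} (htt' : t ≤ t')
    (hs : |t - s| < |t - s'|) (hs' : |t' - s'| < |t' - s|) : s ≤ s' := by
  by_contra! hcross
  have hmid : s + s' < t + t := (abs_sub_lt_abs_sub_iff_add_lt_add hcross).1 hs
  have hmid' : ¬s + s' < t' + t' :=
    fun h ↦ lt_asymm hs' ((abs_sub_lt_abs_sub_iff_add_lt_add hcross).2 h)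
  exact hmid' (hmid.trans_le (add_le_add htt' htt'))

end NearestNeighbour

theorem stmt_17_general (Tx Ty : Finset ℝ) (f g : ℝ → ℝ)
    (hf : ∀ t ∈ Tx, f t ∈ Ty ∧ ∀ s' ∈ Ty, s' ≠ f t → |t - f t| < |t - s'|)
    (t s t' s' : ℝ) (ht : t ∈ Tx) (hs : s ∈ Ty) (ht' : t' ∈ Tx) (hs' : s' ∈ Ty)
    (h1 : f t = s ∧ g s = t) (h2 : f t' = s' ∧ g s' = t')
    (hlt : t < t') : s ≤ s' := by
  obtain ⟨rfl, -⟩ := h1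
  obtain ⟨rfl, -⟩ := h2
  rcases eq_or_ne (f t) (f t') with heq | hne
  · exact heq.le
  exact le_of_abs_sub_lt_abs_sub hlt.le ((hf t ht).2 _ hs' hne.symm) ((hf t' ht').2 _ hs hne)

/-- the mutual nearest-neighbor alignment (with unique nearest
neighbors) is order-preserving: matched pairs cannot cross. -/
theorem stmt_17 (Tx Ty : Finset ℝ) (f g : ℝ → ℝ)
    (hf : ∀ t ∈ Tx, f t ∈ Ty ∧ ∀ s' ∈ Ty, s' ≠ f t → |t - f t| < |t - s'|)
    (hg : ∀ s ∈ Ty, g s ∈ Tx ∧ ∀ t' ∈ Tx, t' ≠ g s → |g s - s| < |t' - s|)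
    (t s t' s' : ℝ) (ht : t ∈ Tx) (hs : s ∈ Ty) (ht' : t' ∈ Tx) (hs' : s' ∈ Ty)
    (h1 : f t = s ∧ g s = t) (h2 : f t' = s' ∧ g s' = t')
    (hlt : t < t') : s ≤ s' :=
  stmt_17_general Tx Ty f g hf t s t' s' ht hs ht' hs' h1 h2 hlt
end
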